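/- Suppose r < T_k(a) and the unique pair (u*, l*) with l* ≤ a↓_k ≤ u* satisfying the KKT system (∑_{i=1}^k max{u* − a↓_i, 0} = ∑_{j=k+1}^n max{a↓_j − l*, 0} and ∑_{i=1}^n max{a_i − u*, 0} + k l* = r) exists. Then l* < u*, i.e., the Lagrange multiplier λ* = u* − l* of the top-k-sum constraint is strictly positive. -/
import Mathlib


open Finset

/-- The entries of `a` rearranged in nonincreasing order. -/
noncomputable def sortDesc (n : ℕ) (a : Fin n → ℝ) : Fin n → ℝ :=
  fun i => a (Tuple.sort a i.rev)

/-- The sum of the `k` largest entries of `a`. -/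
noncomputable def topKSum (n k : ℕ) (a : Fin n → ℝ) : ℝ :=
  ∑ i : Fin n, if (i : ℕ) < k then sortDesc n a i else 0
/-- If `r < T_k(a)` and `(u*, l*)` with `l* ≤ a↓_k ≤ u*` satisfies the KKT system,
then `l* < u*`, i.e., the multiplier `λ* = u* − l*` is strictly positive. -/
theorem stmt18 (n k : ℕ) (hn : 2 ≤ n) (hk1 : 1 ≤ k) (hk : k < n) (r : ℝ)
    (a : Fin n → ℝ) (hr : r < topKSum n k a) (ustar lstar : ℝ)
    (hl : lstar ≤ sortDesc n a ⟨k - 1, by omega⟩)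
    (hu : sortDesc n a ⟨k - 1, by omega⟩ ≤ ustar)
    (harea : (∑ i : Fin n, if (i : ℕ) < k then max (ustar - sortDesc n a i) 0 else 0)
        = ∑ j : Fin n, if k ≤ (j : ℕ) then max (sortDesc n a j - lstar) 0 else 0)
    (hsum : (∑ i : Fin n, max (a i - ustar) 0) + (k : ℝ) * lstar = r) :
    lstar < ustar := by
  by_contra h
  push_neg at h
  -- the sum of positive parts is invariant under sorting
  have hperm : (∑ i : Fin n, max (a i - ustar) 0)
      = ∑ i : Fin n, max (sortDesc n a i - ustar) 0 := by
    have := Equiv.sum_comp ((Fin.revPerm).trans (Tuple.sort a))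
      (fun j => max (a j - ustar) 0)
    exact this.symm
  -- count of indices below k
  have hcard : (∑ i : Fin n, if (i : ℕ) < k then ustar else 0) = (k : ℝ) * ustar := by
    rw [Fin.sum_univ_eq_sum_range (fun i => if i < k then ustar else 0),
      ← Finset.sum_filter]
    have hfil : (Finset.range n).filter (fun i => i < k) = Finset.range k := by
      ext x
      simp only [Finset.mem_filter, Finset.mem_range]
      omega
    rw [hfil, Finset.sum_const, Finset.card_range]
    simp [mul_comm]
  have key : topKSum n k a - (k : ℝ) * ustar ≤ ∑ i : Fin n, max (sortDesc n a i - ustar) 0 := by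
    have h1 : (∑ i : Fin n, if (i : ℕ) < k then max (sortDesc n a i - ustar) 0 else 0)
        ≤ ∑ i : Fin n, max (sortDesc n a i - ustar) 0 := by
      apply Finset.sum_le_sum
      intro i _
      split
      · exact le_refl _
      · exact le_max_right _ _
    have h2 : topKSum n k a - (k : ℝ) * ustar
        ≤ ∑ i : Fin n, if (i : ℕ) < k then max (sortDesc n a i - ustar) 0 else 0 := by
      rw [topKSum, ← hcard, ← Finset.sum_sub_distrib]
      apply Finset.sum_le_sum
      intro i _
      split
      · exact le_max_left _ _
      · simp
    linarith
  have : topKSum n k a ≤ r := by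
    have hkl : (k : ℝ) * ustar ≤ (k : ℝ) * lstar := by
      apply mul_le_mul_of_nonneg_left h
      positivity
    rw [← hsum, hperm]
    linarith
  linarith
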